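/- Let α ∈ (1,2), g_k^{(α)} = (−1)^k C(α,k), and define w_0^{(α)} = (α/2) g_0^{(α)} and w_k^{(α)} = (α/2) g_k^{(α)} + ((2−α)/2) g_{k−1}^{(α)} for k ≥ 1. Then w_0^{(α)} = α/2 > 0, w_1^{(α)} = (2 − α − α²)/2 < 0, w_k^{(α)} > 0 for all k ≥ 3, 1 > w_0^{(α)} > w_3^{(α)} > w_4^{(α)} > ⋯ > 0, and ∑_{k=0}^∞ w_k^{(α)} = 0. -/

import Mathlib

/-! By Pascal's rule the partial sums of the fractional binomial coefficients telescope,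
`∑_{k ≤ n} g_k^{(α)} = g_n^{(α-1)}`, and `|g_n^{(β)}| ≤ 1/n` for `β ∈ [0,1]`, so these partial sums
tend to `0`. As `g_k^{(α)} > 0` for `k ≥ 2`, this convergence is unconditional: `∑ g_k = 0`.
Each `w_{k+1} = (α/2) g_{k+1} + (1 - α/2) g_k` is a convex combination of two consecutive
coefficients, so positivity and monotonicity pass from `g` to `w`, and
`∑ w_k = (α/2) ∑ g_k + ((2-α)/2) ∑ g_k = 0`. -/

/-- The fractional binomial coefficients
`g_k^{(α)} = (−1)^k C(α,k) = ((−1)^k/k!) α(α−1)⋯(α−k+1)`. -/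
noncomputable def fracBinom (α : ℝ) (k : ℕ) : ℝ :=
  (-1) ^ k / (Nat.factorial k) * ∏ i ∈ Finset.range k, (α - i)

/-- The second-order Grünwald weights: `w_0 = (α/2) g_0`,
`w_k = (α/2) g_k + ((2−α)/2) g_{k−1}` for `k ≥ 1`. -/
noncomputable def grunwaldW (α : ℝ) : ℕ → ℝ
  | 0 => α / 2 * fracBinom α 0
  | (k + 1) => α / 2 * fracBinom α (k + 1) + (2 - α) / 2 * fracBinom α k

open Filter Topology Finset

lemma hasSum_of_tendsto_of_eventually_nonneg {f : ℕ → ℝ} {a : ℝ} (hf : ∀ᶠ n in atTop, 0 ≤ f n)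
    (h : Tendsto (fun n ↦ ∑ i ∈ range n, f i) atTop (𝓝 a)) : HasSum f a := by
  obtain ⟨k, hk⟩ := eventually_atTop.1 hf
  rw [← hasSum_nat_add_iff' k, hasSum_iff_tendsto_nat_of_nonneg fun n ↦ hk _ (Nat.le_add_left k n)]
  have hshift : (fun n ↦ ∑ i ∈ range n, f (i + k)) =
      fun n ↦ ∑ i ∈ range (n + k), f i - ∑ i ∈ range k, f i := by
    ext n
    rw [add_comm n k, sum_range_add_sub_sum_range]
    simp only [add_comm]
  rw [hshift]
  exact (h.comp (tendsto_add_atTop_nat k)).sub_const _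

lemma fracBinom_zero (α : ℝ) : fracBinom α 0 = 1 := by
  simp [fracBinom]

lemma fracBinom_succ (α : ℝ) (k : ℕ) :
    fracBinom α (k + 1) = (k - α) / (k + 1) * fracBinom α k := by
  simp only [fracBinom, prod_range_succ, Nat.factorial_succ, pow_succ]
  push_cast
  field_simp
  ring

lemma fracBinom_one (α : ℝ) : fracBinom α 1 = -α := by
  simpa [fracBinom_zero] using fracBinom_succ α 0

lemma fracBinom_two (α : ℝ) : fracBinom α 2 = α * (α - 1) / 2 := by
  rw [fracBinom_succ, fracBinom_one]
  push_cast
  ring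

lemma fracBinom_eq_neg_one_pow_mul_choose (α : ℝ) (k : ℕ) :
    fracBinom α k = (-1) ^ k * Ring.choose α k := by
  rw [Ring.choose_eq_smul, ← Polynomial.aeval_eq_smeval, Polynomial.aeval_def,
    ← Polynomial.eval_map, descPochhammer_map, descPochhammer_eval_eq_prod_range, fracBinom,
    smul_eq_mul]
  ring

lemma fracBinom_pascal (α : ℝ) (k : ℕ) :
    fracBinom α (k + 1) = fracBinom (α - 1) (k + 1) - fracBinom (α - 1) k := by
  have h := Ring.choose_succ_succ (α - 1) k
  rw [sub_add_cancel] at h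
  simp only [fracBinom_eq_neg_one_pow_mul_choose, h, pow_succ]
  ring

lemma sum_range_succ_fracBinom (α : ℝ) (n : ℕ) :
    ∑ k ∈ range (n + 1), fracBinom α k = fracBinom (α - 1) n := by
  induction n with
  | zero => simp [fracBinom_zero]
  | succ n ih => rw [sum_range_succ, ih, fracBinom_pascal]; ring

lemma natCast_mul_abs_fracBinom_le_one {β : ℝ} (h0 : 0 ≤ β) (h1 : β ≤ 1) (n : ℕ) :
    n * |fracBinom β n| ≤ 1 := by
  rcases Nat.eq_zero_or_pos n with rfl | hn
  · simp
  induction n, hn using Nat.le_induction with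
  | base => simp [fracBinom_one, abs_of_nonneg h0, h1]
  | succ n hn ih =>
    have hn' : (1 : ℝ) ≤ n := by exact_mod_cast hn
    have hβn : |(n : ℝ) - β| ≤ n := abs_le.2 ⟨by linarith, by linarith⟩
    calc ((n + 1 : ℕ) : ℝ) * |fracBinom β (n + 1)| = |(n : ℝ) - β| * |fracBinom β n| := by
          rw [fracBinom_succ, abs_mul, abs_div, abs_of_pos (by positivity : (0 : ℝ) < n + 1)]
          push_cast
          field_simp
      _ ≤ n * |fracBinom β n| := by gcongr
      _ ≤ 1 := ih

lemma tendsto_fracBinom_atTop {β : ℝ} (h0 : 0 ≤ β) (h1 : β ≤ 1) :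
    Tendsto (fracBinom β) atTop (𝓝 0) := by
  refine squeeze_zero_norm' ?_ tendsto_one_div_atTop_nhds_zero_nat
  filter_upwards [eventually_gt_atTop 0] with n hn
  rw [Real.norm_eq_abs, le_div_iff₀ (by positivity), mul_comm]
  exact natCast_mul_abs_fracBinom_le_one h0 h1 n

lemma fracBinom_pos {α : ℝ} (hα : α ∈ Set.Ioo (1 : ℝ) 2) {k : ℕ} (hk : 2 ≤ k) :
    0 < fracBinom α k := by
  obtain ⟨h1, h2⟩ := hα
  induction k, hk using Nat.le_induction with
  | base => rw [fracBinom_two]; nlinarith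
  | succ k hk ih =>
    have hk' : (2 : ℝ) ≤ k := by exact_mod_cast hk
    rw [fracBinom_succ]
    exact mul_pos (div_pos (by linarith) (by positivity)) ih

lemma fracBinom_succ_lt {α : ℝ} (hα : α ∈ Set.Ioo (1 : ℝ) 2) {k : ℕ} (hk : 2 ≤ k) :
    fracBinom α (k + 1) < fracBinom α k := by
  have hratio : ((k : ℝ) - α) / (k + 1) < 1 := by
    rw [div_lt_one (by positivity)]
    linarith [hα.1]
  rw [fracBinom_succ]
  exact mul_lt_of_lt_one_left (fracBinom_pos hα hk) hratio

lemma hasSum_fracBinom {α : ℝ} (hα : α ∈ Set.Ioo (1 : ℝ) 2) : HasSum (fracBinom α) 0 := by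
  refine hasSum_of_tendsto_of_eventually_nonneg
    (eventually_atTop.2 ⟨2, fun k hk ↦ (fracBinom_pos hα hk).le⟩) ?_
  rw [← tendsto_add_atTop_iff_nat 1]
  simp only [sum_range_succ_fracBinom]
  exact tendsto_fracBinom_atTop (by linarith [hα.1]) (by linarith [hα.2])

lemma grunwaldW_zero (α : ℝ) : grunwaldW α 0 = α / 2 := by
  simp [grunwaldW, fracBinom_zero]

lemma grunwaldW_one (α : ℝ) : grunwaldW α 1 = (2 - α - α ^ 2) / 2 := by
  rw [grunwaldW, fracBinom_one, fracBinom_zero]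
  ring

lemma grunwaldW_pos {α : ℝ} (hα : α ∈ Set.Ioo (1 : ℝ) 2) {k : ℕ} (hk : 3 ≤ k) :
    0 < grunwaldW α k := by
  obtain ⟨k, rfl⟩ := Nat.exists_eq_add_of_le' hk
  rw [grunwaldW]
  exact add_pos (mul_pos (by linarith [hα.1]) (fracBinom_pos hα (by omega)))
    (mul_pos (by linarith [hα.2]) (fracBinom_pos hα (by omega)))

lemma grunwaldW_succ_lt {α : ℝ} (hα : α ∈ Set.Ioo (1 : ℝ) 2) {k : ℕ} (hk : 3 ≤ k) :
    grunwaldW α (k + 1) < grunwaldW α k := by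
  obtain ⟨k, rfl⟩ := Nat.exists_eq_add_of_le' hk
  rw [grunwaldW, grunwaldW]
  exact add_lt_add (mul_lt_mul_of_pos_left (fracBinom_succ_lt hα (by omega)) (by linarith [hα.1]))
    (mul_lt_mul_of_pos_left (fracBinom_succ_lt hα (by omega)) (by linarith [hα.2]))

lemma grunwaldW_three_lt {α : ℝ} (hα : α ∈ Set.Ioo (1 : ℝ) 2) : grunwaldW α 3 < α / 2 := by
  calc grunwaldW α 3 < α / 2 * fracBinom α 2 + (2 - α) / 2 * fracBinom α 2 := by
        rw [grunwaldW]
        gcongr ?_ + _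
        exact mul_lt_mul_of_pos_left (fracBinom_succ_lt hα le_rfl) (by linarith [hα.1])
    _ = α * (α - 1) / 2 := by rw [fracBinom_two]; ring
    _ < α / 2 := by nlinarith [hα.1, hα.2]

lemma hasSum_grunwaldW_of_hasSum_fracBinom {α s : ℝ} (h : HasSum (fracBinom α) s) :
    HasSum (grunwaldW α) s := by
  have hshift : HasSum (fun k ↦ fracBinom α (k + 1)) (s - 1) := by
    simpa [fracBinom_zero] using (hasSum_nat_add_iff' 1).2 h
  rw [← hasSum_nat_add_iff' 1, sum_range_one, grunwaldW_zero,
    show s - α / 2 = α / 2 * (s - 1) + (2 - α) / 2 * s by ring]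
  exact (hshift.mul_left (α / 2)).add (h.mul_left ((2 - α) / 2))

/-- For `α ∈ (1,2)` the second-order Grünwald weights satisfy: `w_0 = α/2 > 0`,
`w_1 = (2 − α − α²)/2 < 0`, `w_k > 0` for `k ≥ 3`,
`1 > w_0 > w_3 > w_4 > ⋯ > 0`, and `∑_{k=0}^∞ w_k = 0`. -/
theorem grunwaldW_properties (α : ℝ) (hα : α ∈ Set.Ioo (1 : ℝ) 2) :
    grunwaldW α 0 = α / 2 ∧ 0 < grunwaldW α 0 ∧
    grunwaldW α 1 = (2 - α - α ^ 2) / 2 ∧ grunwaldW α 1 < 0 ∧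
    (∀ k : ℕ, 3 ≤ k → 0 < grunwaldW α k) ∧
    grunwaldW α 0 < 1 ∧
    grunwaldW α 3 < grunwaldW α 0 ∧
    (∀ k : ℕ, 3 ≤ k → grunwaldW α (k + 1) < grunwaldW α k) ∧
    HasSum (fun k : ℕ => grunwaldW α k) 0 := by
  rw [grunwaldW_zero, grunwaldW_one]
  exact ⟨rfl, by linarith [hα.1], rfl, by nlinarith [hα.1], fun k ↦ grunwaldW_pos hα,
    by linarith [hα.2], grunwaldW_three_lt hα, fun k ↦ grunwaldW_succ_lt hα,
    hasSum_grunwaldW_of_hasSum_fracBinom (hasSum_fracBinom hα)⟩
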